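/- arXiv:0910.4417 — 5 statements merged into one kernel-verified Lean document; each statement's English description precedes it below -/
import Mathlib

section
/- Under the hypotheses T_{tt} = UW, (T_{ξt})² = -U_ξW_ξ, ∂_t(T_ξ)² = U_ξW_{ξξ} - W_ξU_{ξξ}, with G := WU_ξ - UW_ξ, and assuming G ≠ 0 and T_{ξt} ≠ 0, the identity T_ξ G = T_{ξt} T_{ξξtt} - T_{ξtt} T_{ξξt} + 2(T_{ξt})³ holds. -/
noncomputable def pdx (f : ℝ → ℝ → ℝ) : ℝ → ℝ → ℝ :=
  fun x t => deriv (fun y => f y t) x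

noncomputable def pdt (f : ℝ → ℝ → ℝ) : ℝ → ℝ → ℝ :=
  fun x t => deriv (fun s => f x s) t

open Filter Topology

/-- Directional derivative of a function on the plane. -/
noncomputable def Dv (v : ℝ × ℝ) (g : ℝ × ℝ → ℝ) : ℝ × ℝ → ℝ :=
  fun p => fderiv ℝ g p v

lemma diffAt {F : Type*} [NormedAddCommGroup F] [NormedSpace ℝ F]
    {s : Set (ℝ × ℝ)} (hs : IsOpen s) {g : ℝ × ℝ → F}
    (hg : ContDiffOn ℝ (⊤ : ℕ∞) g s) {p : ℝ × ℝ} (hp : p ∈ s) :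
    DifferentiableAt ℝ g p :=
  (hg.contDiffAt (hs.mem_nhds hp)).differentiableAt (by simp)

lemma smoothDv {s : Set (ℝ × ℝ)} (hs : IsOpen s) {g : ℝ × ℝ → ℝ}
    (hg : ContDiffOn ℝ (⊤ : ℕ∞) g s) (v : ℝ × ℝ) :
    ContDiffOn ℝ (⊤ : ℕ∞) (Dv v g) s :=
  (hg.fderiv_of_isOpen hs (by simp)).clm_apply contDiffOn_const

lemma Dv_congr {s : Set (ℝ × ℝ)} (hs : IsOpen s) {g g' : ℝ × ℝ → ℝ}
    (h : ∀ q ∈ s, g q = g' q) {p : ℝ × ℝ} (hp : p ∈ s) (v : ℝ × ℝ) :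
    Dv v g p = Dv v g' p := by
  have hev : g =ᶠ[𝓝 p] g' := by
    filter_upwards [hs.mem_nhds hp] with q hq using h q hq
  simp only [Dv, hev.fderiv_eq]

lemma Dv_swap {s : Set (ℝ × ℝ)} (hs : IsOpen s) {g : ℝ × ℝ → ℝ}
    (hg : ContDiffOn ℝ (⊤ : ℕ∞) g s) {p : ℝ × ℝ} (hp : p ∈ s) (v w : ℝ × ℝ) :
    Dv v (Dv w g) p = Dv w (Dv v g) p := by
  have hfd : ContDiffOn ℝ (⊤ : ℕ∞) (fderiv ℝ g) s := hg.fderiv_of_isOpen hs (by simp)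
  have hdd : DifferentiableAt ℝ (fderiv ℝ g) p := diffAt hs hfd hp
  have key : ∀ x a : ℝ × ℝ, Dv x (Dv a g) p = fderiv ℝ (fderiv ℝ g) p x a := by
    intro x a
    have h5 : fderiv ℝ (fun q => (fderiv ℝ g q) a) p
        = (fderiv ℝ g p).comp (fderiv ℝ (fun _ : ℝ × ℝ => a) p)
          + (fderiv ℝ (fderiv ℝ g) p).flip a :=
      fderiv_clm_apply hdd (differentiableAt_const a)
    show fderiv ℝ (fun q => (fderiv ℝ g q) a) p x = _
    rw [h5]
    simp
  rw [key v w, key w v]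
  refine second_derivative_symmetric_of_eventually (f := g) ?_ hdd.hasFDerivAt v w
  filter_upwards [hs.mem_nhds hp] with q hq using (diffAt hs hg hq).hasFDerivAt

lemma bridge_x {s : Set (ℝ × ℝ)} (hs : IsOpen s) {g : ℝ × ℝ → ℝ}
    (hg : ContDiffOn ℝ (⊤ : ℕ∞) g s) {h : ℝ → ℝ → ℝ}
    (heq : ∀ q ∈ s, h q.1 q.2 = g q) {x t : ℝ} (hp : (x, t) ∈ s) :
    pdx h x t = Dv (1, 0) g (x, t) := by
  have hcont : Continuous fun y : ℝ => ((y, t) : ℝ × ℝ) :=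
    continuous_id.prodMk continuous_const
  have hev : (fun y => h y t) =ᶠ[𝓝 x] fun y => g (y, t) := by
    filter_upwards [(hs.preimage hcont).mem_nhds hp] with y hy using heq (y, t) hy
  have h1 : HasDerivAt (fun y : ℝ => ((y, t) : ℝ × ℝ)) ((1 : ℝ), (0 : ℝ)) x :=
    (hasDerivAt_id x).prodMk (hasDerivAt_const x t)
  have hd : HasDerivAt (fun y => g (y, t)) (fderiv ℝ g (x, t) (1, 0)) x :=
    (diffAt hs hg hp).hasFDerivAt.comp_hasDerivAt x h1
  show deriv (fun y => h y t) x = _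
  rw [hev.deriv_eq, hd.deriv]
  rfl

lemma bridge_t {s : Set (ℝ × ℝ)} (hs : IsOpen s) {g : ℝ × ℝ → ℝ}
    (hg : ContDiffOn ℝ (⊤ : ℕ∞) g s) {h : ℝ → ℝ → ℝ}
    (heq : ∀ q ∈ s, h q.1 q.2 = g q) {x t : ℝ} (hp : (x, t) ∈ s) :
    pdt h x t = Dv (0, 1) g (x, t) := by
  have hcont : Continuous fun r : ℝ => ((x, r) : ℝ × ℝ) :=
    continuous_const.prodMk continuous_id
  have hev : (fun r => h x r) =ᶠ[𝓝 t] fun r => g (x, r) := by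
    filter_upwards [(hs.preimage hcont).mem_nhds hp] with r hr using heq (x, r) hr
  have h1 : HasDerivAt (fun r : ℝ => ((x, r) : ℝ × ℝ)) ((0 : ℝ), (1 : ℝ)) t :=
    (hasDerivAt_const t x).prodMk (hasDerivAt_id t)
  have hd : HasDerivAt (fun r => g (x, r)) (fderiv ℝ g (x, t) (0, 1)) t :=
    (diffAt hs hg hp).hasFDerivAt.comp_hasDerivAt t h1
  show deriv (fun r => h x r) t = _
  rw [hev.deriv_eq, hd.deriv]
  rfl

lemma Dv_mul {u w : ℝ × ℝ → ℝ} {p : ℝ × ℝ} (hu : DifferentiableAt ℝ u p)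
    (hw : DifferentiableAt ℝ w p) (v : ℝ × ℝ) :
    Dv v (fun q => u q * w q) p = Dv v u p * w p + u p * Dv v w p := by
  simp only [Dv]
  rw [fderiv_fun_mul hu hw]
  simp only [ContinuousLinearMap.add_apply, ContinuousLinearMap.smul_apply, smul_eq_mul]
  ring

lemma Dv_add {u w : ℝ × ℝ → ℝ} {p : ℝ × ℝ} (hu : DifferentiableAt ℝ u p)
    (hw : DifferentiableAt ℝ w p) (v : ℝ × ℝ) :
    Dv v (fun q => u q + w q) p = Dv v u p + Dv v w p := by
  simp only [Dv]
  rw [fderiv_fun_add hu hw]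
  simp

lemma Dv_neg (u : ℝ × ℝ → ℝ) (p v : ℝ × ℝ) :
    Dv v (fun q => -(u q)) p = -(Dv v u p) := by
  simp only [Dv, fderiv_neg]
  simp

lemma Dv_sq {u : ℝ × ℝ → ℝ} {p : ℝ × ℝ} (hu : DifferentiableAt ℝ u p) (v : ℝ × ℝ) :
    Dv v (fun q => u q ^ 2) p = 2 * u p * Dv v u p := by
  have hrw : (fun q => u q ^ 2) = fun q => u q * u q := by
    funext q; ring
  rw [hrw, Dv_mul hu hu v]; ring

/-- With `G := W U_ξ - U W_ξ` nonvanishing and `T_{ξt}` nonvanishing, one has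
`T_ξ G = T_{ξt} T_{ξξtt} - T_{ξtt} T_{ξξt} + 2 (T_{ξt})³`. -/
theorem stmt6 (U W T : ℝ → ℝ → ℝ) (s : Set (ℝ × ℝ)) (hs : IsOpen s)
    (hUs : ContDiffOn ℝ (⊤ : ℕ∞) (fun p : ℝ × ℝ => U p.1 p.2) s)
    (hWs : ContDiffOn ℝ (⊤ : ℕ∞) (fun p : ℝ × ℝ => W p.1 p.2) s)
    (hTs : ContDiffOn ℝ (⊤ : ℕ∞) (fun p : ℝ × ℝ => T p.1 p.2) s)
    (htoda : ∀ ξ t, (ξ, t) ∈ s → pdt (pdt T) ξ t = U ξ t * W ξ t)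
    (hbil : ∀ ξ t, (ξ, t) ∈ s → (pdt (pdx T) ξ t) ^ 2 = -(pdx U ξ t * pdx W ξ t))
    (hres : ∀ ξ t, (ξ, t) ∈ s →
      pdt (fun y r => (pdx T y r) ^ 2) ξ t
        = pdx U ξ t * pdx (pdx W) ξ t - pdx W ξ t * pdx (pdx U) ξ t)
    (hUne : ∀ ξ t, (ξ, t) ∈ s → U ξ t ≠ 0)
    (hWne : ∀ ξ t, (ξ, t) ∈ s → W ξ t ≠ 0)
    (hGne : ∀ ξ t, (ξ, t) ∈ s → W ξ t * pdx U ξ t - U ξ t * pdx W ξ t ≠ 0)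
    (hTxt : ∀ ξ t, (ξ, t) ∈ s → pdt (pdx T) ξ t ≠ 0) :
    ∀ ξ t, (ξ, t) ∈ s →
      pdx T ξ t * (W ξ t * pdx U ξ t - U ξ t * pdx W ξ t)
        = pdt (pdx T) ξ t * pdt (pdt (pdx (pdx T))) ξ t
            - pdt (pdt (pdx T)) ξ t * pdt (pdx (pdx T)) ξ t
            + 2 * (pdt (pdx T) ξ t) ^ 3 := by
  -- notations
  set e1 : ℝ × ℝ := (1, 0) with he1
  set e2 : ℝ × ℝ := (0, 1) with he2
  set Tp : ℝ × ℝ → ℝ := fun q => T q.1 q.2 with hTp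
  set Up : ℝ × ℝ → ℝ := fun q => U q.1 q.2 with hUp
  set Wp : ℝ × ℝ → ℝ := fun q => W q.1 q.2 with hWp
  -- smoothness of iterated directional derivatives
  have hA1 : ContDiffOn ℝ (⊤ : ℕ∞) (Dv e1 Tp) s := smoothDv hs hTs e1
  have hA2 : ContDiffOn ℝ (⊤ : ℕ∞) (Dv e2 Tp) s := smoothDv hs hTs e2
  have hA12 : ContDiffOn ℝ (⊤ : ℕ∞) (Dv e2 (Dv e1 Tp)) s := smoothDv hs hA1 e2
  have hA11 : ContDiffOn ℝ (⊤ : ℕ∞) (Dv e1 (Dv e1 Tp)) s := smoothDv hs hA1 e1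
  have hA112 : ContDiffOn ℝ (⊤ : ℕ∞) (Dv e2 (Dv e1 (Dv e1 Tp))) s := smoothDv hs hA11 e2
  have hA22 : ContDiffOn ℝ (⊤ : ℕ∞) (Dv e2 (Dv e2 Tp)) s := smoothDv hs hA2 e2
  have hU1 : ContDiffOn ℝ (⊤ : ℕ∞) (Dv e1 Up) s := smoothDv hs hUs e1
  have hW1 : ContDiffOn ℝ (⊤ : ℕ∞) (Dv e1 Wp) s := smoothDv hs hWs e1
  -- bridges: curried partials equal directional derivatives on s
  have hb1 : ∀ q ∈ s, pdx T q.1 q.2 = Dv e1 Tp q := fun q hq =>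
    bridge_x hs hTs (fun _ _ => rfl) hq
  have hb2 : ∀ q ∈ s, pdt T q.1 q.2 = Dv e2 Tp q := fun q hq =>
    bridge_t hs hTs (fun _ _ => rfl) hq
  have hb12 : ∀ q ∈ s, pdt (pdx T) q.1 q.2 = Dv e2 (Dv e1 Tp) q := fun q hq =>
    bridge_t hs hA1 hb1 hq
  have hb122 : ∀ q ∈ s, pdt (pdt (pdx T)) q.1 q.2 = Dv e2 (Dv e2 (Dv e1 Tp)) q :=
    fun q hq => bridge_t hs hA12 hb12 hq
  have hb11 : ∀ q ∈ s, pdx (pdx T) q.1 q.2 = Dv e1 (Dv e1 Tp) q := fun q hq =>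
    bridge_x hs hA1 hb1 hq
  have hb112 : ∀ q ∈ s, pdt (pdx (pdx T)) q.1 q.2 = Dv e2 (Dv e1 (Dv e1 Tp)) q :=
    fun q hq => bridge_t hs hA11 hb11 hq
  have hb1122 : ∀ q ∈ s,
      pdt (pdt (pdx (pdx T))) q.1 q.2 = Dv e2 (Dv e2 (Dv e1 (Dv e1 Tp))) q :=
    fun q hq => bridge_t hs hA112 hb112 hq
  have hb22 : ∀ q ∈ s, pdt (pdt T) q.1 q.2 = Dv e2 (Dv e2 Tp) q := fun q hq =>
    bridge_t hs hA2 hb2 hq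
  have hbU1 : ∀ q ∈ s, pdx U q.1 q.2 = Dv e1 Up q := fun q hq =>
    bridge_x hs hUs (fun _ _ => rfl) hq
  have hbW1 : ∀ q ∈ s, pdx W q.1 q.2 = Dv e1 Wp q := fun q hq =>
    bridge_x hs hWs (fun _ _ => rfl) hq
  have hbU11 : ∀ q ∈ s, pdx (pdx U) q.1 q.2 = Dv e1 (Dv e1 Up) q := fun q hq =>
    bridge_x hs hU1 hbU1 hq
  have hbW11 : ∀ q ∈ s, pdx (pdx W) q.1 q.2 = Dv e1 (Dv e1 Wp) q := fun q hq =>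
    bridge_x hs hW1 hbW1 hq
  -- Toda equation at pair level
  have hT22 : ∀ q ∈ s, Dv e2 (Dv e2 Tp) q = Up q * Wp q := fun q hq =>
    (hb22 q hq).symm.trans (htoda q.1 q.2 hq)
  -- commutations at the level of functions on s
  have hswap1 : ∀ q ∈ s, Dv e2 (Dv e1 Tp) q = Dv e1 (Dv e2 Tp) q := fun q hq =>
    Dv_swap hs hTs hq e2 e1
  -- `T_{ξtt} = U_ξ W + U W_ξ` on s
  have hc : ∀ q ∈ s, Dv e2 (Dv e2 (Dv e1 Tp)) q
      = Dv e1 Up q * Wp q + Up q * Dv e1 Wp q := by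
    intro q hq
    have h1 : Dv e2 (Dv e2 (Dv e1 Tp)) q = Dv e2 (Dv e1 (Dv e2 Tp)) q :=
      Dv_congr hs hswap1 hq e2
    have h2 : Dv e2 (Dv e1 (Dv e2 Tp)) q = Dv e1 (Dv e2 (Dv e2 Tp)) q :=
      Dv_swap hs hA2 hq e2 e1
    have h3 : Dv e1 (Dv e2 (Dv e2 Tp)) q = Dv e1 (fun r => Up r * Wp r) q :=
      Dv_congr hs hT22 hq e1
    have h4 : Dv e1 (fun r => Up r * Wp r) q
        = Dv e1 Up q * Wp q + Up q * Dv e1 Wp q :=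
      Dv_mul (diffAt hs hUs hq) (diffAt hs hWs hq) e1
    rw [h1, h2, h3, h4]
  -- `T_{ξξt} = ∂_ξ T_{ξt}` on s
  have hd' : ∀ q ∈ s, Dv e2 (Dv e1 (Dv e1 Tp)) q = Dv e1 (Dv e2 (Dv e1 Tp)) q :=
    fun q hq => Dv_swap hs hA1 hq e2 e1
  -- point of interest
  intro ξ t hp
  set p : ℝ × ℝ := (ξ, t) with hpd
  -- `T_{ξξtt} = U_ξξ W + 2 U_ξ W_ξ + U W_ξξ` at p
  have he : Dv e2 (Dv e2 (Dv e1 (Dv e1 Tp))) p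
      = Dv e1 (Dv e1 Up) p * Wp p + 2 * (Dv e1 Up p * Dv e1 Wp p)
        + Up p * Dv e1 (Dv e1 Wp) p := by
    have h1 : Dv e2 (Dv e2 (Dv e1 (Dv e1 Tp))) p
        = Dv e2 (Dv e1 (Dv e2 (Dv e1 Tp))) p := Dv_congr hs hd' hp e2
    have h2 : Dv e2 (Dv e1 (Dv e2 (Dv e1 Tp))) p
        = Dv e1 (Dv e2 (Dv e2 (Dv e1 Tp))) p := Dv_swap hs hA12 hp e2 e1
    have h3 : Dv e1 (Dv e2 (Dv e2 (Dv e1 Tp))) p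
        = Dv e1 (fun r => Dv e1 Up r * Wp r + Up r * Dv e1 Wp r) p :=
      Dv_congr hs hc hp e1
    have hd1 : DifferentiableAt ℝ (fun r => Dv e1 Up r * Wp r) p :=
      (diffAt hs hU1 hp).mul (diffAt hs hWs hp)
    have hd2 : DifferentiableAt ℝ (fun r => Up r * Dv e1 Wp r) p :=
      (diffAt hs hUs hp).mul (diffAt hs hW1 hp)
    have h4 : Dv e1 (fun r => Dv e1 Up r * Wp r + Up r * Dv e1 Wp r) p
        = Dv e1 (fun r => Dv e1 Up r * Wp r) p
          + Dv e1 (fun r => Up r * Dv e1 Wp r) p := Dv_add hd1 hd2 e1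
    have h5 : Dv e1 (fun r => Dv e1 Up r * Wp r) p
        = Dv e1 (Dv e1 Up) p * Wp p + Dv e1 Up p * Dv e1 Wp p :=
      Dv_mul (diffAt hs hU1 hp) (diffAt hs hWs hp) e1
    have h6 : Dv e1 (fun r => Up r * Dv e1 Wp r) p
        = Dv e1 Up p * Dv e1 Wp p + Up p * Dv e1 (Dv e1 Wp) p :=
      Dv_mul (diffAt hs hUs hp) (diffAt hs hW1 hp) e1
    rw [h1, h2, h3, h4, h5, h6]; ring
  -- bilinear equation at pair level on s, then its ξ-derivative at p
  have hbilp : ∀ q ∈ s, (Dv e2 (Dv e1 Tp) q) ^ 2 = -(Dv e1 Up q * Dv e1 Wp q) := by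
    intro q hq
    rw [← hb12 q hq, ← hbU1 q hq, ← hbW1 q hq]
    exact hbil q.1 q.2 hq
  have hR5 : 2 * Dv e2 (Dv e1 Tp) p * Dv e2 (Dv e1 (Dv e1 Tp)) p
      = -(Dv e1 (Dv e1 Up) p * Dv e1 Wp p + Dv e1 Up p * Dv e1 (Dv e1 Wp) p) := by
    have h1 : Dv e1 (fun q => (Dv e2 (Dv e1 Tp) q) ^ 2) p
        = Dv e1 (fun q => -(Dv e1 Up q * Dv e1 Wp q)) p := Dv_congr hs hbilp hp e1
    have h2 : Dv e1 (fun q => (Dv e2 (Dv e1 Tp) q) ^ 2) p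
        = 2 * Dv e2 (Dv e1 Tp) p * Dv e1 (Dv e2 (Dv e1 Tp)) p :=
      Dv_sq (diffAt hs hA12 hp) e1
    have h3 : Dv e1 (fun q => -(Dv e1 Up q * Dv e1 Wp q)) p
        = -(Dv e1 (fun q => Dv e1 Up q * Dv e1 Wp q) p) :=
      Dv_neg (fun q => Dv e1 Up q * Dv e1 Wp q) p e1
    have h4 : Dv e1 (fun q => Dv e1 Up q * Dv e1 Wp q) p
        = Dv e1 (Dv e1 Up) p * Dv e1 Wp p + Dv e1 Up p * Dv e1 (Dv e1 Wp) p :=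
      Dv_mul (diffAt hs hU1 hp) (diffAt hs hW1 hp) e1
    have h2' : 2 * Dv e2 (Dv e1 Tp) p * Dv e1 (Dv e2 (Dv e1 Tp)) p
        = -(Dv e1 (Dv e1 Up) p * Dv e1 Wp p + Dv e1 Up p * Dv e1 (Dv e1 Wp) p) := by
      rw [← h2, h1, h3, h4]
    rw [hd' p hp]
    exact h2'
  -- residue equation: `∂_t (T_ξ)² = 2 T_ξ T_{ξt}` at p
  have hR2 : 2 * Dv e1 Tp p * Dv e2 (Dv e1 Tp) p
      = Dv e1 Up p * Dv e1 (Dv e1 Wp) p - Dv e1 Wp p * Dv e1 (Dv e1 Up) p := by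
    have hg : ContDiffOn ℝ (⊤ : ℕ∞) (fun q => (Dv e1 Tp q) ^ 2) s := hA1.pow 2
    have hbr : pdt (fun y r => (pdx T y r) ^ 2) ξ t
        = Dv e2 (fun q => (Dv e1 Tp q) ^ 2) p := by
      refine bridge_t hs hg ?_ hp
      intro q hq
      rw [hb1 q hq]
    have hsq : Dv e2 (fun q => (Dv e1 Tp q) ^ 2) p
        = 2 * Dv e1 Tp p * Dv e2 (Dv e1 Tp) p := Dv_sq (diffAt hs hA1 hp) e2
    have := hres ξ t hp
    rw [hbr, hsq] at this
    rw [this, hbU1 p hp, hbW1 p hp, hbU11 p hp, hbW11 p hp]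
  -- rewrite the goal in pair-level terms
  rw [hb1 p hp, hbU1 p hp, hbW1 p hp, hb12 p hp, hb1122 p hp, hb122 p hp, hb112 p hp]
  show Dv e1 Tp p * (Wp p * Dv e1 Up p - Up p * Dv e1 Wp p)
      = Dv e2 (Dv e1 Tp) p * Dv e2 (Dv e2 (Dv e1 (Dv e1 Tp))) p
        - Dv e2 (Dv e2 (Dv e1 Tp)) p * Dv e2 (Dv e1 (Dv e1 Tp)) p
        + 2 * (Dv e2 (Dv e1 Tp) p) ^ 3
  -- abbreviations
  set a := Dv e1 Tp p
  set b := Dv e2 (Dv e1 Tp) p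
  set c := Dv e2 (Dv e2 (Dv e1 Tp)) p
  set d := Dv e2 (Dv e1 (Dv e1 Tp)) p
  set ee := Dv e2 (Dv e2 (Dv e1 (Dv e1 Tp))) p
  set u := Up p
  set w := Wp p
  set u1 := Dv e1 Up p
  set w1 := Dv e1 Wp p
  set u11 := Dv e1 (Dv e1 Up) p
  set w11 := Dv e1 (Dv e1 Wp) p
  have hR1 : b ^ 2 = -(u1 * w1) := hbilp p hp
  have hR3 : c = u1 * w + u * w1 := hc p hp
  have hbne : b ≠ 0 := by
    have := hTxt ξ t hp
    rwa [hb12 p hp] at this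
  have h2b : (2 : ℝ) * b ≠ 0 := by
    exact mul_ne_zero two_ne_zero hbne
  apply mul_right_cancel₀ h2b
  linear_combination (w * u1 - u * w1) * hR2
    + (-2 * (u11 * w + 2 * u1 * w1 + u * w11) - 4 * b ^ 2 + 4 * u1 * w1) * hR1
    + (-2 * b ^ 2) * he + c * hR5 + (-(u11 * w1 + u1 * w11)) * hR3
end

section
/- Suppose a smooth function T of (ξ,t) is such that there exist smooth U, W with T_{tt} = UW, (T_{ξt})² = -U_ξW_ξ, ∂_t(T_ξ)² = U_ξW_{ξξ} - W_ξU_{ξξ}, and the nondegeneracy conditions U, W, T_{ξt}, G := WU_ξ - UW_ξ nonvanishing hold. Then T satisfies the universal PDE (T_{ξt}T_{ξξtt} - T_{ξtt}T_{ξξt} + 2(T_{ξt})³)² = (T_ξ)² (4T_{tt}(T_{ξt})² + (T_{ξtt})²). -/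
namespace Stmt7
open scoped ContDiff

def unc (f : ℝ → ℝ → ℝ) : ℝ × ℝ → ℝ := fun p => f p.1 p.2

def Sm (f : ℝ → ℝ → ℝ) (s : Set (ℝ × ℝ)) : Prop :=
  ContDiffOn ℝ ∞ (unc f) s

variable {f g : ℝ → ℝ → ℝ} {s : Set (ℝ × ℝ)} {ξ t : ℝ}

lemma one_le_inf : (1 : WithTop ℕ∞) ≤ ∞ := by
  exact_mod_cast le_top

lemma inf_add_one : ∞ + 1 ≤ ∞ := by
  simp

lemma diffAt (hs : IsOpen s) (hf : Sm f s) (hp : (ξ, t) ∈ s) :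
    DifferentiableAt ℝ (unc f) (ξ, t) :=
  (hf.differentiableOn (by simp)).differentiableAt (hs.mem_nhds hp)

lemma sliceX (hd : DifferentiableAt ℝ (unc f) (ξ, t)) :
    HasDerivAt (fun y => f y t) (fderiv ℝ (unc f) (ξ, t) (1, 0)) ξ := by
  have h1 : HasDerivAt (fun y : ℝ => (y, t)) ((1 : ℝ), (0 : ℝ)) ξ :=
    (hasDerivAt_id ξ).prodMk (hasDerivAt_const ξ t)
  exact hd.hasFDerivAt.comp_hasDerivAt ξ h1

lemma sliceT (hd : DifferentiableAt ℝ (unc f) (ξ, t)) :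
    HasDerivAt (fun r => f ξ r) (fderiv ℝ (unc f) (ξ, t) (0, 1)) t := by
  have h1 : HasDerivAt (fun r : ℝ => (ξ, r)) ((0 : ℝ), (1 : ℝ)) t :=
    (hasDerivAt_const t ξ).prodMk (hasDerivAt_id t)
  exact hd.hasFDerivAt.comp_hasDerivAt t h1

lemma pdx_eq (hd : DifferentiableAt ℝ (unc f) (ξ, t)) :
    pdx f ξ t = fderiv ℝ (unc f) (ξ, t) (1, 0) := (sliceX hd).deriv

lemma pdt_eq (hd : DifferentiableAt ℝ (unc f) (ξ, t)) :
    pdt f ξ t = fderiv ℝ (unc f) (ξ, t) (0, 1) := (sliceT hd).deriv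

lemma smD (hs : IsOpen s) (hf : Sm f s) (v : ℝ × ℝ) :
    ContDiffOn ℝ ∞ (fun p => fderiv ℝ (unc f) p v) s :=
  (hf.fderiv_of_isOpen hs inf_add_one).clm_apply contDiffOn_const

lemma smooth_pdx (hs : IsOpen s) (hf : Sm f s) : Sm (pdx f) s := by
  apply (smD hs hf (1, 0)).congr
  rintro ⟨x, y⟩ hp
  exact pdx_eq (diffAt hs hf hp)

lemma smooth_pdt (hs : IsOpen s) (hf : Sm f s) : Sm (pdt f) s := by
  apply (smD hs hf (0, 1)).congr
  rintro ⟨x, y⟩ hp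
  exact pdt_eq (diffAt hs hf hp)


lemma eventX (hs : IsOpen s) (hp : (ξ, t) ∈ s) : ∀ᶠ y in nhds ξ, (y, t) ∈ s :=
  (Continuous.continuousAt (by continuity)).preimage_mem_nhds (hs.mem_nhds hp)

lemma eventT (hs : IsOpen s) (hp : (ξ, t) ∈ s) : ∀ᶠ r in nhds t, (ξ, r) ∈ s :=
  (Continuous.continuousAt (by continuity)).preimage_mem_nhds (hs.mem_nhds hp)

lemma pdx_congr (hs : IsOpen s) (h : ∀ x y, (x, y) ∈ s → f x y = g x y)
    (hp : (ξ, t) ∈ s) : pdx f ξ t = pdx g ξ t := by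
  apply Filter.EventuallyEq.deriv_eq
  filter_upwards [eventX hs hp] with y hy using h y t hy

lemma pdt_congr (hs : IsOpen s) (h : ∀ x y, (x, y) ∈ s → f x y = g x y)
    (hp : (ξ, t) ∈ s) : pdt f ξ t = pdt g ξ t := by
  apply Filter.EventuallyEq.deriv_eq
  filter_upwards [eventT hs hp] with r hr using h ξ r hr

lemma Dswap (hs : IsOpen s) (hf : Sm f s) (hp : (ξ, t) ∈ s) (v w : ℝ × ℝ) :
    fderiv ℝ (fun q => fderiv ℝ (unc f) q v) (ξ, t) w
      = fderiv ℝ (fun q => fderiv ℝ (unc f) q w) (ξ, t) v := by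
  have hev : ∀ᶠ y in nhds (ξ, t), HasFDerivAt (unc f) (fderiv ℝ (unc f) y) y := by
    filter_upwards [hs.mem_nhds hp] with q hq using
      ((hf.differentiableOn (by simp)).differentiableAt (hs.mem_nhds hq)).hasFDerivAt
  have hd2 : DifferentiableAt ℝ (fderiv ℝ (unc f)) (ξ, t) :=
    (((hf.fderiv_of_isOpen hs inf_add_one).differentiableOn
      (by simp)).differentiableAt (hs.mem_nhds hp))
  have hsymm := second_derivative_symmetric_of_eventually hev hd2.hasFDerivAt v w
  have e1 : ∀ u : ℝ × ℝ, fderiv ℝ (fun q => fderiv ℝ (unc f) q u) (ξ, t)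
      = (fderiv ℝ (fderiv ℝ (unc f)) (ξ, t)).flip u := by
    intro u
    rw [fderiv_clm_apply hd2 (differentiableAt_const u)]
    simp
  rw [e1 v, e1 w]
  simpa using hsymm.symm

lemma swapXT (hs : IsOpen s) (hf : Sm f s) (hp : (ξ, t) ∈ s) :
    pdx (pdt f) ξ t = pdt (pdx f) ξ t := by
  have hDv : ∀ v : ℝ × ℝ, DifferentiableAt ℝ (fun q => fderiv ℝ (unc f) q v) (ξ, t) :=
    fun v => ((smD hs hf v).differentiableOn (by simp)).differentiableAt (hs.mem_nhds hp)
  have h1 : pdx (pdt f) ξ t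
      = fderiv ℝ (fun q => fderiv ℝ (unc f) q (0, 1)) (ξ, t) (1, 0) := by
    have e : pdx (pdt f) ξ t
        = pdx (fun x y => fderiv ℝ (unc f) (x, y) (0, 1)) ξ t := by
      apply Filter.EventuallyEq.deriv_eq
      filter_upwards [eventX hs hp] with y hy using pdt_eq (diffAt hs hf hy)
    rw [e]
    exact pdx_eq (f := fun x y => fderiv ℝ (unc f) (x, y) (0, 1)) (hDv (0, 1))
  have h2 : pdt (pdx f) ξ t
      = fderiv ℝ (fun q => fderiv ℝ (unc f) q (1, 0)) (ξ, t) (0, 1) := by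
    have e : pdt (pdx f) ξ t
        = pdt (fun x y => fderiv ℝ (unc f) (x, y) (1, 0)) ξ t := by
      apply Filter.EventuallyEq.deriv_eq
      filter_upwards [eventT hs hp] with r hr using pdx_eq (diffAt hs hf hr)
    rw [e]
    exact pdt_eq (f := fun x y => fderiv ℝ (unc f) (x, y) (1, 0)) (hDv (1, 0))
  rw [h1, h2, Dswap hs hf hp]

lemma pdx_mul (hs : IsOpen s) (hf : Sm f s) (hg : Sm g s) (hp : (ξ, t) ∈ s) :
    pdx (fun x y => f x y * g x y) ξ t = pdx f ξ t * g ξ t + f ξ t * pdx g ξ t := by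
  have hF := sliceX (diffAt hs hf hp)
  have hG := sliceX (diffAt hs hg hp)
  show deriv (fun y => f y t * g y t) ξ = _
  rw [(hF.fun_mul hG).deriv, ← hF.deriv, ← hG.deriv]
  rfl

lemma pdx_add (hs : IsOpen s) (hf : Sm f s) (hg : Sm g s) (hp : (ξ, t) ∈ s) :
    pdx (fun x y => f x y + g x y) ξ t = pdx f ξ t + pdx g ξ t := by
  have hF := sliceX (diffAt hs hf hp)
  have hG := sliceX (diffAt hs hg hp)
  show deriv (fun y => f y t + g y t) ξ = _
  rw [(hF.fun_add hG).deriv, ← hF.deriv, ← hG.deriv]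
  rfl

lemma pdx_sq (hs : IsOpen s) (hf : Sm f s) (hp : (ξ, t) ∈ s) :
    pdx (fun x y => (f x y) ^ 2) ξ t = 2 * f ξ t * pdx f ξ t := by
  have hF := sliceX (diffAt hs hf hp)
  show deriv (fun y => (f y t) ^ 2) ξ = _
  rw [(hF.fun_pow 2).deriv, pdx_eq (diffAt hs hf hp)]
  push_cast
  ring

lemma pdt_sq (hs : IsOpen s) (hf : Sm f s) (hp : (ξ, t) ∈ s) :
    pdt (fun x y => (f x y) ^ 2) ξ t = 2 * f ξ t * pdt f ξ t := by
  have hF := sliceT (diffAt hs hf hp)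
  show deriv (fun r => (f ξ r) ^ 2) t = _
  rw [(hF.fun_pow 2).deriv, pdt_eq (diffAt hs hf hp)]
  push_cast
  ring

lemma pdx_neg : pdx (fun x y => -(f x y)) ξ t = -pdx f ξ t := by
  show deriv (fun y => -(f y t)) ξ = _
  rw [deriv.fun_neg]
  rfl

lemma Sm.mul (hf : Sm f s) (hg : Sm g s) : Sm (fun x y => f x y * g x y) s :=
  ContDiffOn.mul hf hg

end Stmt7

open Stmt7 in
/-- The universal PDE for the logarithm of the gap probability:
`(T_{ξt}T_{ξξtt} - T_{ξtt}T_{ξξt} + 2(T_{ξt})³)² = (T_ξ)²(4T_{tt}(T_{ξt})² + (T_{ξtt})²)`. -/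
theorem stmt7 (U W T : ℝ → ℝ → ℝ) (s : Set (ℝ × ℝ)) (hs : IsOpen s)
    (hUs : ContDiffOn ℝ (⊤ : ℕ∞) (fun p : ℝ × ℝ => U p.1 p.2) s)
    (hWs : ContDiffOn ℝ (⊤ : ℕ∞) (fun p : ℝ × ℝ => W p.1 p.2) s)
    (hTs : ContDiffOn ℝ (⊤ : ℕ∞) (fun p : ℝ × ℝ => T p.1 p.2) s)
    (htoda : ∀ ξ t, (ξ, t) ∈ s → pdt (pdt T) ξ t = U ξ t * W ξ t)
    (hbil : ∀ ξ t, (ξ, t) ∈ s → (pdt (pdx T) ξ t) ^ 2 = -(pdx U ξ t * pdx W ξ t))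
    (hres : ∀ ξ t, (ξ, t) ∈ s →
      pdt (fun y r => (pdx T y r) ^ 2) ξ t
        = pdx U ξ t * pdx (pdx W) ξ t - pdx W ξ t * pdx (pdx U) ξ t)
    (hUne : ∀ ξ t, (ξ, t) ∈ s → U ξ t ≠ 0)
    (hWne : ∀ ξ t, (ξ, t) ∈ s → W ξ t ≠ 0)
    (hGne : ∀ ξ t, (ξ, t) ∈ s → W ξ t * pdx U ξ t - U ξ t * pdx W ξ t ≠ 0)
    (hTxt : ∀ ξ t, (ξ, t) ∈ s → pdt (pdx T) ξ t ≠ 0) :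
    ∀ ξ t, (ξ, t) ∈ s →
      (pdt (pdx T) ξ t * pdt (pdt (pdx (pdx T))) ξ t
          - pdt (pdt (pdx T)) ξ t * pdt (pdx (pdx T)) ξ t
          + 2 * (pdt (pdx T) ξ t) ^ 3) ^ 2
        = (pdx T ξ t) ^ 2 *
            (4 * pdt (pdt T) ξ t * (pdt (pdx T) ξ t) ^ 2
              + (pdt (pdt (pdx T)) ξ t) ^ 2) := by
  intro ξ t hp
  have hT : Sm T s := hTs.of_le (by simp)
  have hU : Sm U s := hUs.of_le (by simp)
  have hW : Sm W s := hWs.of_le (by simp)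
  have hTx := smooth_pdx hs hT
  have hTt := smooth_pdt hs hT
  have hTtt := smooth_pdt hs hTt
  have hTxtS := smooth_pdt hs hTx
  have hUx := smooth_pdx hs hU
  have hWx := smooth_pdx hs hW
  have sw1 : ∀ x y, (x, y) ∈ s → pdx (pdt T) x y = pdt (pdx T) x y :=
    fun x y h => swapXT hs hT h
  have sw2 : ∀ x y, (x, y) ∈ s → pdx (pdt (pdt T)) x y = pdt (pdt (pdx T)) x y := by
    intro x y h
    rw [swapXT hs hTt h]
    exact pdt_congr hs sw1 h
  have sw3 : ∀ x y, (x, y) ∈ s → pdx (pdt (pdx T)) x y = pdt (pdx (pdx T)) x y :=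
    fun x y h => swapXT hs hTx h
  have sw4 : ∀ x y, (x, y) ∈ s →
      pdx (pdx (pdt (pdt T))) x y = pdt (pdt (pdx (pdx T))) x y := by
    intro x y h
    rw [pdx_congr hs sw2 h, swapXT hs hTxtS h]
    exact pdt_congr hs sw3 h
  have hA : ∀ x y, (x, y) ∈ s →
      pdx (pdt (pdt T)) x y = pdx U x y * W x y + U x y * pdx W x y := by
    intro x y h
    rw [pdx_congr hs htoda h]
    exact pdx_mul hs hU hW h
  have h2 : pdt (pdt (pdx T)) ξ t = pdx U ξ t * W ξ t + U ξ t * pdx W ξ t := by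
    rw [← sw2 ξ t hp]
    exact hA ξ t hp
  have h4 : pdt (pdt (pdx (pdx T))) ξ t
      = pdx (pdx U) ξ t * W ξ t + pdx U ξ t * pdx W ξ t
        + (pdx U ξ t * pdx W ξ t + U ξ t * pdx (pdx W) ξ t) := by
    rw [← sw4 ξ t hp, pdx_congr hs hA hp,
      pdx_add hs (hUx.mul hW) (hU.mul hWx) hp,
      pdx_mul hs hUx hW hp, pdx_mul hs hU hWx hp]
  have h3 : 2 * pdt (pdx T) ξ t * pdt (pdx (pdx T)) ξ t
      = -(pdx (pdx U) ξ t * pdx W ξ t + pdx U ξ t * pdx (pdx W) ξ t) := by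
    have h := pdx_congr hs hbil hp
    rw [pdx_sq hs hTxtS hp, pdx_neg, pdx_mul hs hUx hWx hp, sw3 ξ t hp] at h
    exact h
  have h5 : 2 * pdx T ξ t * pdt (pdx T) ξ t
      = pdx U ξ t * pdx (pdx W) ξ t - pdx W ξ t * pdx (pdx U) ξ t := by
    have h := hres ξ t hp
    rwa [pdt_sq hs hTx hp] at h
  have h0 := htoda ξ t hp
  have h1 := hbil ξ t hp
  have key : pdt (pdx T) ξ t *
      (pdt (pdx T) ξ t * pdt (pdt (pdx (pdx T))) ξ t
        - pdt (pdt (pdx T)) ξ t * pdt (pdx (pdx T)) ξ t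
        + 2 * (pdt (pdx T) ξ t) ^ 3)
      = pdt (pdx T) ξ t *
        (pdx T ξ t * (pdx U ξ t * W ξ t - U ξ t * pdx W ξ t)) := by
    linear_combination (pdt (pdt (pdx (pdx T))) ξ t + 2 * (pdt (pdx T) ξ t) ^ 2
        - 2 * pdx U ξ t * pdx W ξ t) * h1
      + ((pdx (pdx U) ξ t * pdx W ξ t + pdx U ξ t * pdx (pdx W) ξ t) / 2) * h2
      - (pdt (pdt (pdx T)) ξ t / 2) * h3
      - (pdx U ξ t * pdx W ξ t) * h4
      - ((pdx U ξ t * W ξ t - U ξ t * pdx W ξ t) / 2) * h5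
  have keyE := mul_left_cancel₀ (hTxt ξ t hp) key
  linear_combination
    ((pdt (pdx T) ξ t * pdt (pdt (pdx (pdx T))) ξ t
        - pdt (pdt (pdx T)) ξ t * pdt (pdx (pdx T)) ξ t
        + 2 * (pdt (pdx T) ξ t) ^ 3)
      + pdx T ξ t * (pdx U ξ t * W ξ t - U ξ t * pdx W ξ t)) * keyE
    - 4 * (pdx T ξ t) ^ 2 * (pdt (pdx T) ξ t) ^ 2 * h0
    - 4 * U ξ t * W ξ t * (pdx T ξ t) ^ 2 * h1
    - (pdx T ξ t) ^ 2 * (pdt (pdt (pdx T)) ξ t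
        + pdx U ξ t * W ξ t + U ξ t * pdx W ξ t) * h2
end

section
/- Let r be a smooth real function on an open interval satisfying the Painlevé IV–type equation (r'')² + 4(r')²(r' + 2n) = 4(ξr' - r)² for a constant n, with r', r'', and ξr'-r nonvanishing. Then r also satisfies the third-order ODE (r'r''' - (r'')² + 2(r')³)² = 4r²((r'')² + 4(r')²(r' + 2n)). -/
/-- A solution of the Painlevé IV type equation
`(r'')² + 4(r')²(r' + 2n) = 4(ξr' - r)²` also satisfies the third-order ODE
`(r'r''' - (r'')² + 2(r')³)² = 4r²((r'')² + 4(r')²(r' + 2n))`. -/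
theorem stmt8 (a b n : ℝ) (r : ℝ → ℝ)
    (hr : ContDiffOn ℝ (⊤ : ℕ∞) r (Set.Ioo a b))
    (hP4 : ∀ ξ ∈ Set.Ioo a b,
      (deriv (deriv r) ξ) ^ 2 + 4 * (deriv r ξ) ^ 2 * (deriv r ξ + 2 * n)
        = 4 * (ξ * deriv r ξ - r ξ) ^ 2)
    (hr1 : ∀ ξ ∈ Set.Ioo a b, deriv r ξ ≠ 0)
    (hr2 : ∀ ξ ∈ Set.Ioo a b, deriv (deriv r) ξ ≠ 0)
    (hlin : ∀ ξ ∈ Set.Ioo a b, ξ * deriv r ξ - r ξ ≠ 0) :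
    ∀ ξ ∈ Set.Ioo a b,
      (deriv r ξ * deriv (deriv (deriv r)) ξ - (deriv (deriv r) ξ) ^ 2
          + 2 * (deriv r ξ) ^ 3) ^ 2
        = 4 * (r ξ) ^ 2 *
            ((deriv (deriv r) ξ) ^ 2
              + 4 * (deriv r ξ) ^ 2 * (deriv r ξ + 2 * n)) := by
  intro ξ hξ
  have hopen : IsOpen (Set.Ioo a b) := isOpen_Ioo
  have hmem : Set.Ioo a b ∈ nhds ξ := hopen.mem_nhds hξ
  have hu : ContDiffOn ℝ (⊤ : ℕ∞) (deriv r) (Set.Ioo a b) :=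
    hr.deriv_of_isOpen hopen (by norm_num)
  have hv : ContDiffOn ℝ (⊤ : ℕ∞) (deriv (deriv r)) (Set.Ioo a b) :=
    hu.deriv_of_isOpen hopen (by norm_num)
  have hdr : HasDerivAt r (deriv r ξ) ξ :=
    (((hr.differentiableOn (by simp)) ξ hξ).differentiableAt hmem).hasDerivAt
  have hdu : HasDerivAt (deriv r) (deriv (deriv r) ξ) ξ :=
    (((hu.differentiableOn (by simp)) ξ hξ).differentiableAt hmem).hasDerivAt
  have hdv : HasDerivAt (deriv (deriv r)) (deriv (deriv (deriv r)) ξ) ξ :=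
    (((hv.differentiableOn (by simp)) ξ hξ).differentiableAt hmem).hasDerivAt
  set u := deriv r ξ
  set v := deriv (deriv r) ξ
  set w := deriv (deriv (deriv r)) ξ
  -- F vanishes on the interval
  have hF : HasDerivAt (fun x =>
      (deriv (deriv r) x) ^ 2 + 4 * (deriv r x) ^ 2 * (deriv r x + 2 * n)
        - 4 * (x * deriv r x - r x) ^ 2)
      (2 * v * w + (8 * u * (u + 2 * n) + 4 * u ^ 2) * v
        - 8 * (ξ * u - r ξ) * (u + ξ * v - u)) ξ := by
    have h1 : HasDerivAt (fun x => (deriv (deriv r) x) ^ 2) (2 * v * w) ξ := by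
      exact (hdv.pow 2).congr_deriv (by simp only [Pi.pow_apply, Pi.mul_apply, Pi.sub_apply, Nat.cast_ofNat, u, v, w]; ring)
    have h2 : HasDerivAt (fun x => 4 * (deriv r x) ^ 2 * (deriv r x + 2 * n))
        (8 * u * (u + 2 * n) * v + 4 * u ^ 2 * v) ξ := by
      have := ((hdu.pow 2).const_mul 4).mul (hdu.add_const (2 * n))
      exact this.congr_deriv (by simp only [Pi.pow_apply, Pi.mul_apply, Pi.sub_apply, Nat.cast_ofNat, u, v, w]; ring)
    have h3 : HasDerivAt (fun x => 4 * (x * deriv r x - r x) ^ 2)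
        (4 * (2 * (ξ * u - r ξ) * (u + ξ * v - u))) ξ := by
      have hx : HasDerivAt (fun x : ℝ => x) 1 ξ := hasDerivAt_id ξ
      have := ((((hx.mul hdu).sub hdr)).pow 2).const_mul 4
      exact this.congr_deriv (by simp only [Pi.pow_apply, Pi.mul_apply, Pi.sub_apply, Nat.cast_ofNat, u, v, w]; ring)
    have := (h1.add h2).sub h3
    exact this.congr_deriv (by simp only [Pi.pow_apply, Pi.mul_apply, Pi.sub_apply, Nat.cast_ofNat, u, v, w]; ring)
  have hF0 : deriv (fun x =>
      (deriv (deriv r) x) ^ 2 + 4 * (deriv r x) ^ 2 * (deriv r x + 2 * n)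
        - 4 * (x * deriv r x - r x) ^ 2) ξ = 0 := by
    have hev : (fun x =>
        (deriv (deriv r) x) ^ 2 + 4 * (deriv r x) ^ 2 * (deriv r x + 2 * n)
          - 4 * (x * deriv r x - r x) ^ 2) =ᶠ[nhds ξ] (fun _ => 0) := by
      filter_upwards [hmem] with x hx
      have := hP4 x hx
      linarith
    rw [hev.deriv_eq]
    simp
  have hD : 2 * v * w + (8 * u * (u + 2 * n) + 4 * u ^ 2) * v
      - 8 * (ξ * u - r ξ) * (u + ξ * v - u) = 0 := by
    exact hF.deriv.symm.trans hF0
  have hP := hP4 ξ hξ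
  have hv0 := hr2 ξ hξ
  -- from hD, cancel v: w + (4u(u+2n)+2u²) = 4ξ(ξu - r ξ)
  have hw : w + 4 * u * (u + 2 * n) + 2 * u ^ 2 = 4 * ξ * (ξ * u - r ξ) := by
    have h2 : v * (w + 4 * u * (u + 2 * n) + 2 * u ^ 2 - 4 * ξ * (ξ * u - r ξ)) = 0 := by
      ring_nf
      ring_nf at hD
      linarith
    rcases mul_eq_zero.1 h2 with h | h
    · exact absurd h hv0
    · linarith
  have hexp : u * w - v ^ 2 + 2 * u ^ 3 = 4 * (ξ * u - r ξ) * r ξ := by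
    linear_combination u * hw - hP
  rw [hexp]
  linear_combination (-4) * (r ξ) ^ 2 * hP
end

section
/- Let σ be smooth on an open interval I ⊂ (0,∞) with σ' nonvanishing, and let g be smooth nonvanishing with g² = 4(ξσ' - σ + c)(σ')² + ξ²(σ'')² (c a constant) and ξ(σ'(ξσ''' + σ'') - ξ(σ'')² + 2(σ')³) = σg. Then σ'g' - σ''g = σσ''. -/
/-- Laguerre case: eliminating `σ'''` between the defining relations for `g`
gives `σ'g' - σ''g = σσ''`. -/
theorem stmt11 (a b c : ℝ) (ha : 0 < a) (σ g : ℝ → ℝ)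
    (hσ : ContDiffOn ℝ (⊤ : ℕ∞) σ (Set.Ioo a b))
    (hg : ContDiffOn ℝ (⊤ : ℕ∞) g (Set.Ioo a b))
    (hgsq : ∀ ξ ∈ Set.Ioo a b,
      (g ξ) ^ 2 = 4 * (ξ * deriv σ ξ - σ ξ + c) * (deriv σ ξ) ^ 2
        + ξ ^ 2 * (deriv (deriv σ) ξ) ^ 2)
    (hgdef : ∀ ξ ∈ Set.Ioo a b,
      ξ * (deriv σ ξ * (ξ * deriv (deriv (deriv σ)) ξ + deriv (deriv σ) ξ)
          - ξ * (deriv (deriv σ) ξ) ^ 2 + 2 * (deriv σ ξ) ^ 3) = σ ξ * g ξ)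
    (hgne : ∀ ξ ∈ Set.Ioo a b, g ξ ≠ 0)
    (hσ1 : ∀ ξ ∈ Set.Ioo a b, deriv σ ξ ≠ 0) :
    ∀ ξ ∈ Set.Ioo a b,
      deriv σ ξ * deriv g ξ - deriv (deriv σ) ξ * g ξ
        = σ ξ * deriv (deriv σ) ξ := by
  intro ξ hξ
  have hopen : IsOpen (Set.Ioo a b) := isOpen_Ioo
  have hσ' : ContDiffOn ℝ (⊤ : ℕ∞) (deriv σ) (Set.Ioo a b) :=
    hσ.deriv_of_isOpen hopen (by simp)
  have hσ'' : ContDiffOn ℝ (⊤ : ℕ∞) (deriv (deriv σ)) (Set.Ioo a b) :=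
    hσ'.deriv_of_isOpen hopen (by simp)
  have hmem := hopen.mem_nhds hξ
  have dσ : DifferentiableAt ℝ σ ξ :=
    (hσ.contDiffAt hmem).differentiableAt (by simp)
  have dσ' : DifferentiableAt ℝ (deriv σ) ξ :=
    (hσ'.contDiffAt hmem).differentiableAt (by simp)
  have dσ'' : DifferentiableAt ℝ (deriv (deriv σ)) ξ :=
    (hσ''.contDiffAt hmem).differentiableAt (by simp)
  have dg : DifferentiableAt ℝ g ξ :=
    (hg.contDiffAt hmem).differentiableAt (by simp)
  -- derivative of the left side of hgsq
  have HL : HasDerivAt (fun x => g x ^ 2) (2 * g ξ * deriv g ξ) ξ := by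
    have := dg.hasDerivAt.fun_pow 2
    simpa using this
  -- derivative of the right side of hgsq
  have HR : HasDerivAt
      (fun x => 4 * (x * deriv σ x - σ x + c) * (deriv σ x) ^ 2
        + x ^ 2 * (deriv (deriv σ) x) ^ 2)
      (4 * (ξ * deriv (deriv σ) ξ + deriv σ ξ - deriv σ ξ) * (deriv σ ξ) ^ 2
        + 4 * (ξ * deriv σ ξ - σ ξ + c) * (2 * deriv σ ξ * deriv (deriv σ) ξ)
        + (2 * ξ * (deriv (deriv σ) ξ) ^ 2
          + ξ ^ 2 * (2 * deriv (deriv σ) ξ * deriv (deriv (deriv σ)) ξ))) ξ := by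
    have h1 : HasDerivAt (fun x : ℝ => x * deriv σ x - σ x + c)
        (ξ * deriv (deriv σ) ξ + deriv σ ξ - deriv σ ξ) ξ := by
      have := ((hasDerivAt_id ξ).mul dσ'.hasDerivAt).sub dσ.hasDerivAt
      simpa [mul_comm] using this.add_const c
    have h2 : HasDerivAt (fun x : ℝ => (deriv σ x) ^ 2)
        (2 * deriv σ ξ * deriv (deriv σ) ξ) ξ := by
      simpa using dσ'.hasDerivAt.fun_pow 2
    have h3 : HasDerivAt (fun x : ℝ => (deriv (deriv σ) x) ^ 2)
        (2 * deriv (deriv σ) ξ * deriv (deriv (deriv σ)) ξ) ξ := by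
      simpa using dσ''.hasDerivAt.fun_pow 2
    have h4 : HasDerivAt (fun x : ℝ => x ^ 2) (2 * ξ) ξ := by
      simpa using (hasDerivAt_id ξ).fun_pow 2
    have := ((h1.const_mul 4).fun_mul h2).fun_add (h4.fun_mul h3)
    convert this using 1
    try ring
  have heq : (fun x => g x ^ 2) =ᶠ[nhds ξ]
      (fun x => 4 * (x * deriv σ x - σ x + c) * (deriv σ x) ^ 2
        + x ^ 2 * (deriv (deriv σ) x) ^ 2) := by
    filter_upwards [hmem] with x hx using hgsq x hx
  have HL' := HL.deriv
  have HR' := HR.deriv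
  have eq1 : 2 * g ξ * deriv g ξ
      = 4 * (ξ * deriv (deriv σ) ξ + deriv σ ξ - deriv σ ξ) * (deriv σ ξ) ^ 2
        + 4 * (ξ * deriv σ ξ - σ ξ + c) * (2 * deriv σ ξ * deriv (deriv σ) ξ)
        + (2 * ξ * (deriv (deriv σ) ξ) ^ 2
          + ξ ^ 2 * (2 * deriv (deriv σ) ξ * deriv (deriv (deriv σ)) ξ)) := by
    rw [← HL', ← HR']
    exact heq.deriv_eq
  have eq2 := hgsq ξ hξ
  have eq3 := hgdef ξ hξ
  have hg0 := hgne ξ hξ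
  apply mul_left_cancel₀ hg0
  linear_combination (deriv σ ξ / 2) * eq1 - deriv (deriv σ) ξ * eq2 + deriv (deriv σ) ξ * eq3
end

section
/- Let T be a smooth function of (ξ,t) satisfying the Virasoro constraints of the Gaussian ensemble: T_t = -(1/2)T_ξ and T_tt = (1/4)T_ξξ + n/2 for a constant n. If T also satisfies the universal PDE (T_{ξt}T_{ξξtt} - T_{ξtt}T_{ξξt} + 2(T_{ξt})³)² = (T_ξ)²(4T_{tt}(T_{ξt})² + (T_{ξtt})²), then r := T_ξ (as a function of ξ at fixed t) satisfies the third-order ODE (r'r''' - (r'')² + 2(r')³)² = 4r²((r'')² + 4(r')²(r' + 2n)). -/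
section aux

variable {g : ℝ → ℝ → ℝ}

/-- The partial derivative in the first variable as a directional fderiv. -/
lemma pdx_eq_fderiv (hg : ContDiff ℝ (⊤ : ℕ∞) (fun p : ℝ × ℝ => g p.1 p.2)) (x t : ℝ) :
    pdx g x t = fderiv ℝ (fun p : ℝ × ℝ => g p.1 p.2) (x, t) ((1 : ℝ), (0 : ℝ)) := by
  have hin : HasFDerivAt (fun y : ℝ => (y, t))
      ((ContinuousLinearMap.id ℝ ℝ).prod (0 : ℝ →L[ℝ] ℝ)) x :=
    (hasFDerivAt_id x).prodMk (hasFDerivAt_const t x)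
  have hF : HasFDerivAt (fun p : ℝ × ℝ => g p.1 p.2)
      (fderiv ℝ (fun p : ℝ × ℝ => g p.1 p.2) (x, t)) (x, t) :=
    ((hg.differentiable (by simp)) (x, t)).hasFDerivAt
  have := (hF.comp x hin).hasDerivAt.deriv
  simpa [pdx, Function.comp_def] using this

lemma pdt_eq_fderiv (hg : ContDiff ℝ (⊤ : ℕ∞) (fun p : ℝ × ℝ => g p.1 p.2)) (x t : ℝ) :
    pdt g x t = fderiv ℝ (fun p : ℝ × ℝ => g p.1 p.2) (x, t) ((0 : ℝ), (1 : ℝ)) := by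
  have hin : HasFDerivAt (fun s : ℝ => (x, s))
      ((0 : ℝ →L[ℝ] ℝ).prod (ContinuousLinearMap.id ℝ ℝ)) t :=
    (hasFDerivAt_const x t).prodMk (hasFDerivAt_id t)
  have hF : HasFDerivAt (fun p : ℝ × ℝ => g p.1 p.2)
      (fderiv ℝ (fun p : ℝ × ℝ => g p.1 p.2) (x, t)) (x, t) :=
    ((hg.differentiable (by simp)) (x, t)).hasFDerivAt
  have := (hF.comp t hin).hasDerivAt.deriv
  simpa [pdt, Function.comp_def] using this

lemma smooth_dir (hg : ContDiff ℝ (⊤ : ℕ∞) (fun p : ℝ × ℝ => g p.1 p.2)) (v : ℝ × ℝ) :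
    ContDiff ℝ (⊤ : ℕ∞) (fun p : ℝ × ℝ => fderiv ℝ (fun q : ℝ × ℝ => g q.1 q.2) p v) :=
  (hg.fderiv_right (by simp)).clm_apply contDiff_const

lemma smooth_pdx (hg : ContDiff ℝ (⊤ : ℕ∞) (fun p : ℝ × ℝ => g p.1 p.2)) :
    ContDiff ℝ (⊤ : ℕ∞) (fun p : ℝ × ℝ => pdx g p.1 p.2) := by
  have h := smooth_dir hg ((1 : ℝ), (0 : ℝ))
  have e : (fun p : ℝ × ℝ => pdx g p.1 p.2)
      = fun p : ℝ × ℝ => fderiv ℝ (fun q : ℝ × ℝ => g q.1 q.2) p ((1 : ℝ), (0 : ℝ)) := by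
    funext p
    exact pdx_eq_fderiv hg p.1 p.2
  rw [e]
  exact h

/-- Clairaut / Schwarz: mixed partials commute for smooth functions. -/
lemma mixed (hg : ContDiff ℝ (⊤ : ℕ∞) (fun p : ℝ × ℝ => g p.1 p.2)) (x t : ℝ) :
    pdt (pdx g) x t = pdx (pdt g) x t := by
  set F : ℝ × ℝ → ℝ := fun p => g p.1 p.2 with hF
  have hdF : Differentiable ℝ (fderiv ℝ F) :=
    (hg.fderiv_right (m := 1) (by exact WithTop.coe_le_coe.mpr le_top)).differentiable (by simp)
  have hsymm : IsSymmSndFDerivAt ℝ F (x, t) :=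
    hg.contDiffAt.isSymmSndFDerivAt (by rw [minSmoothness_of_isRCLikeNormedField]; exact WithTop.coe_le_coe.mpr le_top)
  -- directional derivative functions
  have key : ∀ v w : ℝ × ℝ, deriv (fun s : ℝ => fderiv ℝ F ((fun s : ℝ => (x, s) ) s) v) t
      = fderiv ℝ (fderiv ℝ F) (x, t) ((0 : ℝ), (1 : ℝ)) v := by
    intro v w
    have hin : HasFDerivAt (fun s : ℝ => (x, s))
        ((0 : ℝ →L[ℝ] ℝ).prod (ContinuousLinearMap.id ℝ ℝ)) t :=
      (hasFDerivAt_const x t).prodMk (hasFDerivAt_id t)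
    have h2 : HasFDerivAt (fun p : ℝ × ℝ => fderiv ℝ F p v)
        ((ContinuousLinearMap.apply ℝ ℝ v).comp (fderiv ℝ (fderiv ℝ F) (x, t))) (x, t) :=
      (ContinuousLinearMap.apply ℝ ℝ v).hasFDerivAt.comp (x, t)
        (hdF (x, t)).hasFDerivAt
    have := (h2.comp t hin).hasDerivAt.deriv
    simpa [Function.comp_def] using this
  have keyx : ∀ v : ℝ × ℝ, deriv (fun y : ℝ => fderiv ℝ F ((y, t) : ℝ × ℝ) v) x
      = fderiv ℝ (fderiv ℝ F) (x, t) ((1 : ℝ), (0 : ℝ)) v := by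
    intro v
    have hin : HasFDerivAt (fun y : ℝ => (y, t))
        ((ContinuousLinearMap.id ℝ ℝ).prod (0 : ℝ →L[ℝ] ℝ)) x :=
      (hasFDerivAt_id x).prodMk (hasFDerivAt_const t x)
    have h2 : HasFDerivAt (fun p : ℝ × ℝ => fderiv ℝ F p v)
        ((ContinuousLinearMap.apply ℝ ℝ v).comp (fderiv ℝ (fderiv ℝ F) (x, t))) (x, t) :=
      (ContinuousLinearMap.apply ℝ ℝ v).hasFDerivAt.comp (x, t)
        (hdF (x, t)).hasFDerivAt
    have := (h2.comp x hin).hasDerivAt.deriv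
    simpa [Function.comp_def] using this
  calc pdt (pdx g) x t
      = deriv (fun s : ℝ => fderiv ℝ F ((x, s) : ℝ × ℝ) ((1 : ℝ), (0 : ℝ))) t := by
        unfold pdt
        congr 1
        funext s
        exact pdx_eq_fderiv hg x s
    _ = fderiv ℝ (fderiv ℝ F) (x, t) ((0 : ℝ), (1 : ℝ)) ((1 : ℝ), (0 : ℝ)) :=
        key ((1 : ℝ), (0 : ℝ)) 0
    _ = fderiv ℝ (fderiv ℝ F) (x, t) ((1 : ℝ), (0 : ℝ)) ((0 : ℝ), (1 : ℝ)) :=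
        hsymm _ _
    _ = deriv (fun y : ℝ => fderiv ℝ F ((y, t) : ℝ × ℝ) ((0 : ℝ), (1 : ℝ))) x :=
        (keyx ((0 : ℝ), (1 : ℝ))).symm
    _ = pdx (pdt g) x t := by
        unfold pdx
        congr 1
        funext y
        exact (pdt_eq_fderiv hg y t).symm

lemma sect_diff_x (hg : ContDiff ℝ (⊤ : ℕ∞) (fun p : ℝ × ℝ => g p.1 p.2)) (x t : ℝ) :
    DifferentiableAt ℝ (fun y => g y t) x :=
  by
    have h : DifferentiableAt ℝ ((fun p : ℝ × ℝ => g p.1 p.2) ∘ fun y : ℝ => (y, t)) x :=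
      ((hg.differentiable (by simp)) ((x, t) : ℝ × ℝ)).comp x
        (differentiableAt_id.prodMk (differentiableAt_const t))
    exact h

lemma sect_diff_t (hg : ContDiff ℝ (⊤ : ℕ∞) (fun p : ℝ × ℝ => g p.1 p.2)) (x t : ℝ) :
    DifferentiableAt ℝ (fun s => g x s) t :=
  by
    have h : DifferentiableAt ℝ ((fun p : ℝ × ℝ => g p.1 p.2) ∘ fun s : ℝ => (x, s)) t :=
      ((hg.differentiable (by simp)) ((x, t) : ℝ × ℝ)).comp t
        ((differentiableAt_const x).prodMk differentiableAt_id)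
    exact h

/-- Propagate a relation `pdt g = c • pdx g` one more `pdx`. -/
lemma key_step (hg : ContDiff ℝ (⊤ : ℕ∞) (fun p : ℝ × ℝ => g p.1 p.2)) (c : ℝ)
    (h : ∀ x t, pdt g x t = c * pdx g x t) (x t : ℝ) :
    pdt (pdx g) x t = c * pdx (pdx g) x t := by
  rw [mixed hg]
  unfold pdx pdt
  have : (fun y => deriv (fun s => g y s) t) = fun y => c * deriv (fun y' => g y' t) y := by
    funext y
    exact h y t
  rw [this]
  exact deriv_const_mul c (sect_diff_x (smooth_pdx hg) x t)

/-- Pull a constant through `pdt`. -/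
lemma pdt_mul {A B : ℝ → ℝ → ℝ} (hB : ContDiff ℝ (⊤ : ℕ∞) (fun p : ℝ × ℝ => B p.1 p.2)) (c : ℝ)
    (h : ∀ x t, A x t = c * B x t) (x t : ℝ) :
    pdt A x t = c * pdt B x t := by
  unfold pdt
  have : (fun s => A x s) = fun s => c * B x s := by funext s; exact h x s
  rw [this]
  exact deriv_const_mul c (sect_diff_t hB x t)

end aux

/-- Gaussian case: the Virasoro constraints `T_t = -(1/2)T_ξ`,
`T_tt = (1/4)T_ξξ + n/2` reduce the universal PDE to the third-order ODE
`(r'r''' - (r'')² + 2(r')³)² = 4r²((r'')² + 4(r')²(r' + 2n))` for `r = T_ξ`. -/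
theorem stmt19 (T : ℝ → ℝ → ℝ) (n t₀ : ℝ)
    (hT : ContDiff ℝ (⊤ : ℕ∞) (fun p : ℝ × ℝ => T p.1 p.2))
    (hvir1 : ∀ ξ t, pdt T ξ t = -(1 / 2) * pdx T ξ t)
    (hvir2 : ∀ ξ t, pdt (pdt T) ξ t = (1 / 4) * pdx (pdx T) ξ t + n / 2)
    (hPDE : ∀ ξ t,
      (pdt (pdx T) ξ t * pdt (pdt (pdx (pdx T))) ξ t
          - pdt (pdt (pdx T)) ξ t * pdt (pdx (pdx T)) ξ t
          + 2 * (pdt (pdx T) ξ t) ^ 3) ^ 2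
        = (pdx T ξ t) ^ 2 *
            (4 * pdt (pdt T) ξ t * (pdt (pdx T) ξ t) ^ 2
              + (pdt (pdt (pdx T)) ξ t) ^ 2))
    (r : ℝ → ℝ) (hr : r = fun ξ => pdx T ξ t₀) :
    ∀ ξ : ℝ,
      (deriv r ξ * deriv (deriv (deriv r)) ξ - (deriv (deriv r) ξ) ^ 2
          + 2 * (deriv r ξ) ^ 3) ^ 2
        = 4 * (r ξ) ^ 2 *
            ((deriv (deriv r) ξ) ^ 2
              + 4 * (deriv r ξ) ^ 2 * (deriv r ξ + 2 * n)) := by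
  intro ξ
  have h1T : ContDiff ℝ (⊤ : ℕ∞) (fun p : ℝ × ℝ => pdx T p.1 p.2) := smooth_pdx hT
  have h2T : ContDiff ℝ (⊤ : ℕ∞) (fun p : ℝ × ℝ => pdx (pdx T) p.1 p.2) := smooth_pdx h1T
  -- first-order relations for successive x-derivatives
  have h1 : ∀ x t, pdt (pdx T) x t = -(1 / 2) * pdx (pdx T) x t :=
    key_step hT _ hvir1
  have h2 : ∀ x t, pdt (pdx (pdx T)) x t = -(1 / 2) * pdx (pdx (pdx T)) x t :=
    key_step h1T _ h1
  have h3 : ∀ x t, pdt (pdx (pdx (pdx T))) x t = -(1 / 2) * pdx (pdx (pdx (pdx T))) x t :=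
    key_step h2T _ h2
  -- second-order in t relations
  have h4 : ∀ x t, pdt (pdt (pdx T)) x t = (1 / 4) * pdx (pdx (pdx T)) x t := by
    intro x t
    have := pdt_mul h2T (-(1 / 2)) h1 x t
    rw [this, h2 x t]; ring
  have h5 : ∀ x t, pdt (pdt (pdx (pdx T))) x t = (1 / 4) * pdx (pdx (pdx (pdx T))) x t := by
    intro x t
    have := pdt_mul (smooth_pdx h2T) (-(1 / 2)) h2 x t
    rw [this, h3 x t]; ring
  -- identify derivatives of r with x-partials at t₀
  subst hr
  have e0 : ∀ x, deriv (fun ξ => pdx T ξ t₀) x = pdx (pdx T) x t₀ := fun x => rfl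
  have e1 : deriv (fun ξ => pdx T ξ t₀) = fun x => pdx (pdx T) x t₀ := funext e0
  have e2 : deriv (fun x => pdx (pdx T) x t₀) = fun x => pdx (pdx (pdx T)) x t₀ := rfl
  have e3 : deriv (fun x => pdx (pdx (pdx T)) x t₀)
      = fun x => pdx (pdx (pdx (pdx T))) x t₀ := rfl
  have hP := hPDE ξ t₀
  rw [h1 ξ t₀, h2 ξ t₀, h4 ξ t₀, h5 ξ t₀, hvir2 ξ t₀] at hP
  simp only [e1, e2, e3]
  linear_combination 64 * hP
end
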